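/- For every complex number z, the infinite product ∏_{n=1}^{∞} (1 + z/n)^n exp(−z + z²/(2n)) converges (where (1+z/n)^n is interpreted as 0 if z = −n for some n, and via the principal branch otherwise); consequently the Barnes G-function G(z+1) = (2π)^{z/2} exp(−((γ+1)z² + z)/2) ∏_{n=1}^{∞} (1 + z/n)^n exp(−z + z²/(2n)) is well defined for all z ∈ ℂ and satisfies G(1) = 1. -/

import Mathlib

/-! Whenever `1 + z/n ≠ 0`, the `n`-th factor is `exp (n (log (1 + z/n) - z/n + z²/(2n²)))`, and
the cubic Taylor bound for `log (1 + w)` makes this exponent `O(‖z‖³/n²)`, hence summable, so the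
product converges. If some `1 + z/n` vanishes, the product is `0`. At `z = 0` every factor is `1`,
which gives `G(1) = 1`. -/

noncomputable section

open Complex

/-- The `n`-th factor (`n ≥ 1`) of the infinite product defining the Barnes G-function:
`(1 + z/n)^n exp(−z + z²/(2n))`.  Since the exponent is a natural number, `(1 + z/n)^n`
is automatically `0` when `z = -n` and needs no branch choice otherwise. -/
def barnesFactor (z : ℂ) (n : ℕ) : ℂ :=
  (1 + z / ((n : ℂ) + 1)) ^ (n + 1) * Complex.exp (-z + z ^ 2 / (2 * ((n : ℂ) + 1)))

/-- The Barnes G-function, defined by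
`G(z+1) = (2π)^{z/2} exp(−((γ+1)z² + z)/2) ∏_{n=1}^{∞} (1 + z/n)^n exp(−z + z²/(2n))`,
with principal-branch complex powers. -/
def BarnesG (w : ℂ) : ℂ :=
  (2 * (Real.pi : ℂ)) ^ ((w - 1) / 2) *
    Complex.exp (-(((Real.eulerMascheroniConstant + 1) * (w - 1) ^ 2 + (w - 1)) / 2)) *
    ∏' n : ℕ, barnesFactor (w - 1) n

namespace Complex

lemma norm_log_one_add_sub_self_add_sq_div_two_le {w : ℂ} (hw : ‖w‖ < 1) :
    ‖log (1 + w) - w + w ^ 2 / 2‖ ≤ ‖w‖ ^ 3 * (1 - ‖w‖)⁻¹ / 3 := by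
  have hTaylor : log (1 + w) - w + w ^ 2 / 2 = log (1 + w) - logTaylor (2 + 1) w := by
    simp only [logTaylor, Finset.sum_range_succ, Finset.sum_range_zero]
    push_cast
    ring
  rw [hTaylor]
  exact (norm_log_sub_logTaylor_le 2 hw).trans_eq (by norm_num)

end Complex

open Filter

def barnesExponent (z : ℂ) (n : ℕ) : ℂ :=
  ((n : ℂ) + 1) * (log (1 + z / ((n : ℂ) + 1)) - z / ((n : ℂ) + 1) + (z / ((n : ℂ) + 1)) ^ 2 / 2)

lemma barnesFactor_eq_exp {z : ℂ} {n : ℕ} (h : 1 + z / ((n : ℂ) + 1) ≠ 0) :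
    barnesFactor z n = exp (barnesExponent z n) := by
  have hpow : (1 + z / ((n : ℂ) + 1)) ^ (n + 1) =
      exp (((n : ℂ) + 1) * log (1 + z / ((n : ℂ) + 1))) := by
    rw [← Nat.cast_add_one, exp_nat_mul, exp_log (by push_cast; exact h)]
  rw [barnesFactor, hpow, ← exp_add, barnesExponent]
  congr 1
  field_simp
  ring

lemma norm_barnesExponent_le {z : ℂ} {n : ℕ} (hn : 2 * ‖z‖ ≤ n + 1) :
    ‖barnesExponent z n‖ ≤ 2 / 3 * ‖z‖ ^ 3 / ((n : ℝ) + 1) ^ 2 := by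
  have hpos : (0 : ℝ) < n + 1 := by positivity
  have hnorm : ‖((n : ℂ) + 1)‖ = n + 1 := by norm_cast
  set w := z / ((n : ℂ) + 1)
  have hw : ‖w‖ = ‖z‖ / (n + 1) := by rw [norm_div, hnorm]
  have hw_half : ‖w‖ ≤ 1 / 2 := by
    rw [hw, div_le_iff₀ hpos]
    linarith
  have hinv : (1 - ‖w‖)⁻¹ ≤ 2 := by
    rw [inv_le_comm₀ (by linarith) (by norm_num)]
    linarith
  calc ‖barnesExponent z n‖
      = (n + 1) * ‖log (1 + w) - w + w ^ 2 / 2‖ := by rw [barnesExponent, norm_mul, hnorm]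
    _ ≤ (n + 1) * (‖w‖ ^ 3 * 2 / 3) := by
        gcongr
        refine (norm_log_one_add_sub_self_add_sq_div_two_le (by linarith)).trans ?_
        gcongr
    _ = 2 / 3 * ‖z‖ ^ 3 / ((n : ℝ) + 1) ^ 2 := by
        rw [hw]
        field_simp

lemma summable_barnesExponent (z : ℂ) : Summable (barnesExponent z) := by
  have hp : Summable fun n : ℕ ↦ 2 / 3 * ‖z‖ ^ 3 / ((n : ℝ) + 1) ^ 2 := by
    have := (summable_nat_add_iff 1).mpr (Real.summable_one_div_nat_pow.mpr one_lt_two)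
    simpa [div_eq_mul_one_div (2 / 3 * ‖z‖ ^ 3)] using this.mul_left (2 / 3 * ‖z‖ ^ 3)
  refine hp.of_norm_bounded_eventually_nat ?_
  filter_upwards [eventually_ge_atTop ⌈2 * ‖z‖⌉₊] with n hn
  exact norm_barnesExponent_le ((Nat.ceil_le.mp hn).trans (by linarith))

theorem multipliable_barnesFactor (z : ℂ) : Multipliable (barnesFactor z) := by
  by_cases! hzero : ∃ n : ℕ, 1 + z / ((n : ℂ) + 1) = 0
  · obtain ⟨n, hn⟩ := hzero
    exact multipliable_of_exists_eq_zero ⟨n, by simp [barnesFactor, hn]⟩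
  · exact (summable_barnesExponent z).hasSum.cexp.multipliable.congr
      fun n ↦ (barnesFactor_eq_exp (hzero n)).symm

theorem barnesFactor_zero (n : ℕ) : barnesFactor 0 n = 1 := by
  simp [barnesFactor]

/-- for every `z ∈ ℂ` the product `∏_{n=1}^{∞} (1 + z/n)^n exp(−z + z²/(2n))`
converges, so the Barnes G-function is well defined on all of `ℂ`; moreover `G(1) = 1`. -/
theorem barnesG_welldefined :
    (∀ z : ℂ, Multipliable (fun n : ℕ => barnesFactor z n)) ∧ BarnesG 1 = 1 := by
  refine ⟨multipliable_barnesFactor, ?_⟩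
  simp [BarnesG, barnesFactor_zero]
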